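/- Let H be a complex inner product space and q ∈ ℝ. If ξ, η ∈ H satisfy ⟨ξ, η⟩ = ⟨η, ξ⟩ (equivalently, ⟨ξ, η⟩ is real), then the left field operator s_ξ = c_ξ + a_ξ and the right field operator d_η = r_η + r*_η commute on the algebraic Fock space F(H): s_ξ ∘ d_η = d_η ∘ s_ξ. -/

import Mathlib

noncomputable section

variable {H : Type*} [NormedAddCommGroup H] [InnerProductSpace ℂ H]

/-- The simple tensor `ζ 0 ⊗ ⋯ ⊗ ζ (n-1)` in the algebraic Fock space
`F(H) = ⨁ₙ H^{⊗n}`, realized as the tensor algebra (for `n = 0` this is the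
vacuum vector `Ω = 1`). -/
def st (n : ℕ) (ζ : Fin n → H) : TensorAlgebra ℂ H :=
  (List.ofFn fun i => TensorAlgebra.ι ℂ (ζ i)).prod

/-- Remove the `i`-th entry from a tuple. -/
def removeNth {α : Type*} : {n : ℕ} → Fin n → (Fin n → α) → Fin (n - 1) → α
  | 0, i, _ => i.elim0
  | _ + 1, i, ζ => fun j => ζ (i.succAbove j)

/-- `c` is the family of (left) `q`-creation operators. -/
def IsCreation (c : H → Module.End ℂ (TensorAlgebra ℂ H)) : Prop :=
  ∀ (ξ : H) (n : ℕ) (ζ : Fin n → H), c ξ (st n ζ) = st (n + 1) (Fin.cons ξ ζ)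

/-- `a` is the family of (left) `q`-annihilation operators. -/
def IsAnnihilation (q : ℝ) (a : H → Module.End ℂ (TensorAlgebra ℂ H)) : Prop :=
  ∀ (ξ : H) (n : ℕ) (ζ : Fin n → H),
    a ξ (st n ζ) =
      ∑ i : Fin n, ((q : ℂ) ^ (i : ℕ) * (inner ℂ ξ (ζ i) : ℂ)) • st (n - 1) (removeNth i ζ)

/-- `r` is the family of right `q`-creation operators:
`r_ξ Ω = ξ` and `r_ξ (ζ₁⊗⋯⊗ζₙ) = ζ₁⊗⋯⊗ζₙ⊗ξ`. -/
def IsRightCreation (r : H → Module.End ℂ (TensorAlgebra ℂ H)) : Prop :=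
  ∀ (ξ : H) (n : ℕ) (ζ : Fin n → H), r ξ (st n ζ) = st (n + 1) (Fin.snoc ζ ξ)

/-- `rs` is the family of right `q`-annihilation operators:
`r*_ξ Ω = 0` and `r*_ξ (ζ₁⊗⋯⊗ζₙ) = Σᵢ q^(n-i) ⟨ξ, ζᵢ⟩ ζ₁⊗⋯⊗ζ̂ᵢ⊗⋯⊗ζₙ`. -/
def IsRightAnnihilation (q : ℝ) (rs : H → Module.End ℂ (TensorAlgebra ℂ H)) : Prop :=
  ∀ (ξ : H) (n : ℕ) (ζ : Fin n → H),
    rs ξ (st n ζ) =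
      ∑ i : Fin n,
        ((q : ℂ) ^ (n - 1 - (i : ℕ)) * (inner ℂ ξ (ζ i) : ℂ)) • st (n - 1) (removeNth i ζ)

/-! On a simple tensor `ζ₁ ⊗ ⋯ ⊗ ζₙ`, the two creation operators act at opposite ends and commute.
The two annihilation operators also commute: removing the entries at two positions in either
order produces the same tensor with the same power of `q`, which depends only on the two
positions; the terms of the two double sums are matched by the involution
`(i, j) ↦ (i.succAbove j, j.predAbove i)`.
In the mixed products only the removal of the newly created vector fails to cancel, so
`a_ξ r_η - r_η a_ξ = q^n ⟨ξ, η⟩` and `r*_η c_ξ - c_ξ r*_η = q^n ⟨η, ξ⟩` on `n`-particle tensors.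
These cancel in `[s_ξ, d_η]` because `⟨ξ, η⟩ = ⟨η, ξ⟩`, and simple tensors span the Fock space. -/

lemma removeNth_eq_finRemoveNth {α : Type*} {n : ℕ} (i : Fin (n + 1)) (ζ : Fin (n + 1) → α) :
    removeNth i ζ = Fin.removeNth i ζ :=
  rfl

lemma removeNth_zero_cons {α : Type*} {n : ℕ} (x : α) (ζ : Fin n → α) :
    removeNth 0 (Fin.cons x ζ : Fin (n + 1) → α) = ζ := by
  rw [removeNth_eq_finRemoveNth, Fin.removeNth_zero, Fin.tail_cons]

lemma removeNth_last_snoc {α : Type*} {n : ℕ} (ζ : Fin n → α) (x : α) :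
    removeNth (Fin.last n) (Fin.snoc ζ x : Fin (n + 1) → α) = ζ := by
  rw [removeNth_eq_finRemoveNth, Fin.removeNth_last, Fin.init_snoc]

lemma removeNth_succ_cons {α : Type*} {n : ℕ} (j : Fin (n + 1)) (x : α) (ζ : Fin (n + 1) → α) :
    removeNth j.succ (Fin.cons x ζ : Fin (n + 2) → α) = Fin.cons x (removeNth j ζ) :=
  Fin.cons_comp_succ_succAbove x ζ j

lemma removeNth_castSucc_snoc {α : Type*} {n : ℕ} (j : Fin (n + 1)) (ζ : Fin (n + 1) → α)
    (x : α) :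
    removeNth j.castSucc (Fin.snoc ζ x : Fin (n + 2) → α) = Fin.snoc (removeNth j ζ) x := by
  funext k
  induction k using Fin.lastCases with
  | last => simp [removeNth_eq_finRemoveNth, Fin.removeNth_apply]
  | cast k => simp [removeNth_eq_finRemoveNth, Fin.removeNth_apply, Fin.castSucc_succAbove_castSucc]

lemma Fin.sum_sum_succAbove_predAbove {M : Type*} [AddCommMonoid M] {n : ℕ}
    (f : Fin (n + 1) → Fin n → M) :
    ∑ i : Fin (n + 1), ∑ j : Fin n, f (i.succAbove j) (j.predAbove i) = ∑ i, ∑ j, f i j := by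
  let e : Fin (n + 1) × Fin n ≃ Fin (n + 1) × Fin n :=
    Function.Involutive.toPerm (fun p => (p.1.succAbove p.2, p.2.predAbove p.1)) fun p =>
      Prod.ext (succAbove_succAbove_predAbove p.1 p.2) (predAbove_predAbove_succAbove p.1 p.2)
  simp only [← Fintype.sum_prod_type']
  exact e.sum_comp fun p => f p.1 p.2

lemma Fin.val_succAbove_add_val_predAbove {n : ℕ} (i : Fin (n + 2)) (j : Fin (n + 1)) :
    (i.succAbove j : ℕ) + (n - j.predAbove i) = n + 1 - i + j := by
  simp only [succAbove, predAbove, lt_def, val_castSucc, apply_dite Fin.val, val_pred,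
    coe_castPred, dite_eq_ite, apply_ite Fin.val, val_succ]
  split_ifs <;> omega

lemma st_append (n k : ℕ) (ζ : Fin n → H) (ζ' : Fin k → H) :
    st n ζ * st k ζ' = st (n + k) (Fin.append ζ ζ') := by
  unfold st
  rw [← List.prod_append, ← List.ofFn_fin_append]
  congr 2
  funext i
  induction i using Fin.addCases with
  | left i => simp [Fin.append_left]
  | right i => simp [Fin.append_right]

lemma span_st_eq_top :
    Submodule.span ℂ {x : TensorAlgebra ℂ H | ∃ n ζ, st n ζ = x} = ⊤ := by
  set S := Submodule.span ℂ {x : TensorAlgebra ℂ H | ∃ n ζ, st n ζ = x}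
  have hmul : S * S ≤ S := by
    rw [Submodule.span_mul_span, Submodule.span_le]
    rintro _ ⟨_, ⟨n, ζ, rfl⟩, _, ⟨k, ζ', rfl⟩, rfl⟩
    exact Submodule.subset_span ⟨n + k, Fin.append ζ ζ', (st_append n k ζ ζ').symm⟩
  rw [eq_top_iff]
  rintro x -
  induction x using TensorAlgebra.induction with
  | algebraMap z =>
    rw [Algebra.algebraMap_eq_smul_one]
    exact S.smul_mem z (Submodule.subset_span ⟨0, Fin.elim0, List.prod_nil⟩)
  | ι x => exact Submodule.subset_span ⟨1, fun _ => x, by simp [st]⟩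
  | mul x y hx hy => exact hmul (Submodule.mul_mem_mul hx hy)
  | add x y hx hy => exact S.add_mem hx hy

section FieldOperators

variable {q : ℝ} {c a r rs : H → Module.End ℂ (TensorAlgebra ℂ H)} (ξ η : H)

lemma creation_rightCreation_comm (hc : IsCreation c) (hr : IsRightCreation r)
    (n : ℕ) (ζ : Fin n → H) : c ξ (r η (st n ζ)) = r η (c ξ (st n ζ)) := by
  rw [hr, hc, hc, hr, Fin.cons_snoc_eq_snoc_cons]

lemma annihilation_rightCreation_apply_st (ha : IsAnnihilation q a) (hr : IsRightCreation r)
    (n : ℕ) (ζ : Fin n → H) :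
    a ξ (r η (st n ζ)) = r η (a ξ (st n ζ)) + ((q : ℂ) ^ n * inner ℂ ξ η) • st n ζ := by
  rw [hr, ha, Fin.sum_univ_castSucc, Fin.snoc_last, Fin.val_last, removeNth_last_snoc]
  congr 1
  rcases n with _ | m
  · rw [ha]; simp
  rw [ha, map_sum]
  refine Finset.sum_congr rfl fun j _ => ?_
  rw [map_smul, hr, Fin.snoc_castSucc, Fin.val_castSucc, removeNth_castSucc_snoc]
  -- the two sides differ only in writing the length as `m + 1` or `m + 1 - 1 + 1`
  rfl

lemma rightAnnihilation_creation_apply_st (hrs : IsRightAnnihilation q rs) (hc : IsCreation c)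
    (n : ℕ) (ζ : Fin n → H) :
    rs η (c ξ (st n ζ)) = c ξ (rs η (st n ζ)) + ((q : ℂ) ^ n * inner ℂ η ξ) • st n ζ := by
  rw [hc, hrs, Fin.sum_univ_succ, Fin.cons_zero, Fin.val_zero, removeNth_zero_cons, add_comm]
  congr 1
  rcases n with _ | m
  · rw [hrs]; simp
  rw [hrs, map_sum]
  refine Finset.sum_congr rfl fun j _ => ?_
  rw [map_smul, hc, Fin.cons_succ, Fin.val_succ, removeNth_succ_cons,
    show m + 1 + 1 - 1 - (j + 1) = m + 1 - 1 - j by omega]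
  rfl

lemma annihilation_rightAnnihilation_comm (ha : IsAnnihilation q a)
    (hrs : IsRightAnnihilation q rs) (n : ℕ) (ζ : Fin n → H) :
    a ξ (rs η (st n ζ)) = rs η (a ξ (st n ζ)) := by
  unfold IsAnnihilation at ha
  unfold IsRightAnnihilation at hrs
  rcases n with _ | _ | k
  · simp [ha, hrs]
  · simp [ha, hrs]
  simp only [ha, hrs, map_sum, map_smul, Finset.smul_sum, smul_smul]
  refine Eq.trans ?_ (Fin.sum_sum_succAbove_predAbove (n := k + 1) _)
  refine Finset.sum_congr rfl fun i _ => Finset.sum_congr rfl fun j _ => ?_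
  have hζ : removeNth (i.succAbove j) ζ (j.predAbove i) = ζ i :=
    congrArg ζ (Fin.succAbove_succAbove_predAbove i j)
  simp only [hζ, removeNth_eq_finRemoveNth]
  rw [← Fin.removeNth_removeNth_eq_swap]
  congr 1
  simp only [Nat.add_sub_cancel, Fin.removeNth_apply]
  rw [mul_mul_mul_comm, ← pow_add, ← Fin.val_succAbove_add_val_predAbove, pow_add]
  ring

end FieldOperators

/-- If `⟨ξ, η⟩ = ⟨η, ξ⟩` then the left field operator `s_ξ = c_ξ + a_ξ` commutes with the
right field operator `d_η = r_η + r*_η`. -/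
theorem stmt6 (q : ℝ) (c a r rs : H → Module.End ℂ (TensorAlgebra ℂ H))
    (hc : IsCreation c) (ha : IsAnnihilation q a)
    (hr : IsRightCreation r) (hrs : IsRightAnnihilation q rs)
    (ξ η : H) (hreal : (inner ℂ ξ η : ℂ) = (inner ℂ η ξ : ℂ)) :
    (c ξ + a ξ) * (r η + rs η) = (r η + rs η) * (c ξ + a ξ) := by
  refine LinearMap.ext_on span_st_eq_top ?_
  rintro _ ⟨n, ζ, rfl⟩
  simp only [Module.End.mul_apply, LinearMap.add_apply, map_add]
  rw [creation_rightCreation_comm ξ η hc hr, annihilation_rightCreation_apply_st ξ η ha hr,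
    rightAnnihilation_creation_apply_st ξ η hrs hc,
    annihilation_rightAnnihilation_comm ξ η ha hrs, hreal]
  abel
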